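/- arXiv:1102.1258 — 4 statements merged into one kernel-verified Lean document; each statement's English description precedes it below -/
import Mathlib

section
/- Let k > 0 and let n₀ be a positive integer such that (n₀−1)²·n₀²·π⁴ ≤ k < n₀²·(n₀+1)²·π⁴. Then μ_{n₀}(k) ≤ μ_n(k) for every positive integer n; consequently β_c(k) = μ_{n₀}(k) = k/(n₀²π²) + n₀²π², so that on each such interval of k the critical value β_c(k) is an affine function of k (β_c is piecewise linear). -/
open Real

/-- `μ_n(k) = k/(n²π²) + n²π²`. -/
noncomputable def mu (n : ℕ) (k : ℝ) : ℝ := k / ((n : ℝ)^2 * π^2) + (n : ℝ)^2 * π^2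

/-- The critical buckling load `β_c(k) = min_{n ≥ 1} μ_n(k)`. -/
noncomputable def betaC (k : ℝ) : ℝ := sInf {x : ℝ | ∃ n : ℕ, 1 ≤ n ∧ x = mu n k}

/-- If `(n₀−1)²n₀²π⁴ ≤ k < n₀²(n₀+1)²π⁴`, then `μ_{n₀}(k)` is the minimum of the `μ_n(k)`,
so `β_c(k) = μ_{n₀}(k) = k/(n₀²π²) + n₀²π²` is affine in `k` on this interval. -/
theorem betaC_eq_mu_of_interval (k : ℝ) (hk : 0 < k) (n₀ : ℕ) (hn₀ : 1 ≤ n₀)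
    (h₁ : ((n₀ : ℝ) - 1)^2 * (n₀ : ℝ)^2 * π^4 ≤ k)
    (h₂ : k < (n₀ : ℝ)^2 * ((n₀ : ℝ) + 1)^2 * π^4) :
    (∀ n : ℕ, 1 ≤ n → mu n₀ k ≤ mu n k) ∧
    betaC k = mu n₀ k ∧
    betaC k = k / ((n₀ : ℝ)^2 * π^2) + (n₀ : ℝ)^2 * π^2 := by
  have hπ : (0:ℝ) < π := Real.pi_pos
  have hn₀r : (1:ℝ) ≤ (n₀:ℝ) := by exact_mod_cast hn₀
  have hn₀pos : (0:ℝ) < (n₀:ℝ) := by linarith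
  have hmain : ∀ n : ℕ, 1 ≤ n → mu n₀ k ≤ mu n k := by
    intro n hn
    have hnr : (1:ℝ) ≤ (n:ℝ) := by exact_mod_cast hn
    have hnpos : (0:ℝ) < (n:ℝ) := by linarith
    have key : mu n k - mu n₀ k =
        (((n:ℝ)^2 - (n₀:ℝ)^2) * ((n:ℝ)^2 * (n₀:ℝ)^2 * π^4 - k)) /
          ((n:ℝ)^2 * (n₀:ℝ)^2 * π^2) := by
      unfold mu
      field_simp
      ring
    have hden : (0:ℝ) < (n:ℝ)^2 * (n₀:ℝ)^2 * π^2 := by positivity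
    have hnum : 0 ≤ ((n:ℝ)^2 - (n₀:ℝ)^2) * ((n:ℝ)^2 * (n₀:ℝ)^2 * π^4 - k) := by
      rcases le_or_gt n₀ n with h | h
      · have hge : (n₀:ℝ) ≤ (n:ℝ) := by exact_mod_cast h
        rcases eq_or_lt_of_le h with he | hlt
        · subst he; simp
        · have hge1 : (n₀:ℝ) + 1 ≤ (n:ℝ) := by exact_mod_cast hlt
          have hsq : ((n₀:ℝ) + 1)^2 ≤ (n:ℝ)^2 := by nlinarith
          have : (n₀:ℝ)^2 * ((n₀:ℝ) + 1)^2 * π^4 ≤ (n:ℝ)^2 * (n₀:ℝ)^2 * π^4 := by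
            nlinarith [pow_pos hπ 4]
          apply mul_nonneg
          · nlinarith
          · linarith
      · have hle1 : (n:ℝ) + 1 ≤ (n₀:ℝ) := by exact_mod_cast h
        have hsq : (n:ℝ)^2 ≤ ((n₀:ℝ) - 1)^2 := by nlinarith
        have : (n:ℝ)^2 * (n₀:ℝ)^2 * π^4 ≤ ((n₀:ℝ) - 1)^2 * (n₀:ℝ)^2 * π^4 := by
          nlinarith [pow_pos hπ 4]
        have ha : (n:ℝ)^2 - (n₀:ℝ)^2 ≤ 0 := by nlinarith
        have hb : (n:ℝ)^2 * (n₀:ℝ)^2 * π^4 - k ≤ 0 := by linarith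
        nlinarith
      
    have : 0 ≤ mu n k - mu n₀ k := by
      rw [key]; exact div_nonneg hnum hden.le
    linarith
  refine ⟨hmain, ?_, ?_⟩
  · have hle : IsLeast {x : ℝ | ∃ n : ℕ, 1 ≤ n ∧ x = mu n k} (mu n₀ k) := by
      constructor
      · exact ⟨n₀, hn₀, rfl⟩
      · rintro x ⟨n, hn, rfl⟩
        exact hmain n hn
    exact hle.csInf_eq
  · have hle : IsLeast {x : ℝ | ∃ n : ℕ, 1 ≤ n ∧ x = mu n k} (mu n₀ k) := by
      constructor
      · exact ⟨n₀, hn₀, rfl⟩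
      · rintro x ⟨n, hn, rfl⟩
        exact hmain n hn
    show betaC k = k / ((n₀ : ℝ)^2 * π^2) + (n₀ : ℝ)^2 * π^2
    rw [show betaC k = sInf {x : ℝ | ∃ n : ℕ, 1 ≤ n ∧ x = mu n k} from rfl, hle.csInf_eq]; rfl
end

section
/- Let n be a positive integer, k > 0 and β < −μ_n(k), and let A be either of the two real numbers A = ±(1/(nπ))·√(−2(β + μ_n(k))). Then the function u(x) = A·sin(nπx) is a stationary beam solution with parameters β, k. -/
open Real

/-- A stationary beam solution with parameters `β ∈ ℝ`, `k > 0`: a four-times continuously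
differentiable function satisfying the beam equation on `[0,1]`
together with the hinged boundary conditions `u(0) = u(1) = u''(0) = u''(1) = 0`. -/
def IsStationarySolution (β k : ℝ) (u : ℝ → ℝ) : Prop :=
  ContDiff ℝ 4 u ∧
  (∀ x ∈ Set.Icc (0 : ℝ) 1,
    iteratedDeriv 4 u x
      - (β + ∫ y in (0 : ℝ)..1, (deriv u y)^2) * iteratedDeriv 2 u x + k * u x = 0) ∧
  u 0 = 0 ∧ u 1 = 0 ∧ iteratedDeriv 2 u 0 = 0 ∧ iteratedDeriv 2 u 1 = 0

/-! For `u = a sin(cx)` with `c = nπ` one has `u'' = -c²u`, `u'''' = c⁴u` and, since `sin c = 0`,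
`∫₀¹ u'² = a²c²/2`. The beam equation thus reduces to `c⁴ + (β + a²c²/2)c² + k = 0`. The choice
of `A` makes `β + A²c²/2 = -μ_n(k)`, and `μ_n(k)c² = k + c⁴` closes the identity. -/

theorem iteratedDeriv_two_mul_const_mul_sin_mul (m : ℕ) (a c x : ℝ) :
    iteratedDeriv (2 * m) (fun x => a * sin (c * x)) x = (-c ^ 2) ^ m * (a * sin (c * x)) := by
  rw [iteratedDeriv_const_mul_field, iteratedDeriv_comp_const_mul contDiff_sin,
    Real.iteratedDeriv_even_sin]
  simp only [Pi.mul_apply, Pi.pow_apply, Pi.neg_apply, Pi.one_apply]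
  rw [neg_pow, pow_mul]; ring

theorem deriv_const_mul_sin_mul (a c : ℝ) :
    deriv (fun x => a * sin (c * x)) = fun x => a * c * cos (c * x) := by
  funext x
  exact (((hasDerivAt_id x).const_mul c).sin.const_mul a).deriv.trans <| by
    simp only [id_eq, mul_one]; ring

theorem integral_cos_mul_sq_of_sin_eq_zero {c : ℝ} (hc : c ≠ 0) (hs : sin c = 0) :
    ∫ x in (0 : ℝ)..1, cos (c * x) ^ 2 = 1 / 2 := by
  rw [intervalIntegral.integral_comp_mul_left (fun x => cos x ^ 2) hc, integral_cos_sq]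
  simp only [mul_one, hs, mul_zero, cos_zero, sin_zero, sub_self, zero_add, sub_zero, smul_eq_mul]
  field_simp

theorem mu_mul_sq {n : ℕ} (hn : n ≠ 0) (k : ℝ) : mu n k * (n * π) ^ 2 = k + (n * π) ^ 4 := by
  have : (n : ℝ) * π ≠ 0 := by positivity
  rw [mu]; field_simp

theorem isStationarySolution_const_mul_sin {n : ℕ} (hn : n ≠ 0) {β k a : ℝ}
    (ha : a ^ 2 * (n * π) ^ 2 = -2 * (β + mu n k)) :
    IsStationarySolution β k (fun x => a * sin (n * π * x)) := by
  set c : ℝ := n * π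
  have hc : c ≠ 0 := by positivity
  have hsin : sin c = 0 := sin_nat_mul_pi n
  have henergy :
      ∫ y in (0 : ℝ)..1, (deriv (fun x => a * sin (c * x)) y) ^ 2 = a ^ 2 * c ^ 2 / 2 := by
    simp only [deriv_const_mul_sin_mul, mul_pow]
    rw [intervalIntegral.integral_const_mul, integral_cos_mul_sq_of_sin_eq_zero hc hsin]
    ring
  have h2 (x : ℝ) : iteratedDeriv 2 (fun x => a * sin (c * x)) x = -c ^ 2 * (a * sin (c * x)) := by
    simpa using iteratedDeriv_two_mul_const_mul_sin_mul 1 a c x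
  have h4 (x : ℝ) : iteratedDeriv 4 (fun x => a * sin (c * x)) x = c ^ 4 * (a * sin (c * x)) := by
    simpa [← pow_mul] using iteratedDeriv_two_mul_const_mul_sin_mul 2 a c x
  refine ⟨contDiff_const.mul (contDiff_sin.comp (contDiff_const.mul contDiff_id)),
    fun x _ => ?_, by simp, by simp [hsin], by simp [h2], by simp [h2, hsin]⟩
  rw [henergy, h2, h4]
  linear_combination (a * sin (c * x)) * (c ^ 2 / 2 * ha - mu_mul_sq hn k)

theorem buckled_is_solution_general (n : ℕ) (hn : 1 ≤ n) (k β A : ℝ)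
    (hβ : β < -mu n k)
    (hA : A = (1 / ((n : ℝ) * π)) * Real.sqrt (-2 * (β + mu n k)) ∨
          A = -((1 / ((n : ℝ) * π)) * Real.sqrt (-2 * (β + mu n k)))) :
    IsStationarySolution β k (fun x => A * Real.sin ((n : ℝ) * π * x)) := by
  have hn0 : n ≠ 0 := by omega
  have hnπ : (n : ℝ) * π ≠ 0 := by positivity
  apply isStationarySolution_const_mul_sin hn0
  rw [sq_eq_sq_iff_eq_or_eq_neg.mpr hA, mul_pow, sq_sqrt (by linarith)]
  field_simp

/-- If `β < −μ_n(k)` and `A = ±(1/(nπ))·√(−2(β + μ_n(k)))`, then `u(x) = A·sin(nπx)` is a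
stationary beam solution with parameters `β`, `k`. -/
theorem buckled_is_solution (n : ℕ) (hn : 1 ≤ n) (k β A : ℝ) (hk : 0 < k)
    (hβ : β < -mu n k)
    (hA : A = (1 / ((n : ℝ) * π)) * Real.sqrt (-2 * (β + mu n k)) ∨
          A = -((1 / ((n : ℝ) * π)) * Real.sqrt (-2 * (β + mu n k)))) :
    IsStationarySolution β k (fun x => A * Real.sin ((n : ℝ) * π * x)) :=
  buckled_is_solution_general n hn k β A hβ hA
end

section
/- Let i < j be positive integers, let k = i²·j²·π⁴ (a resonant value, so that μ_i(k) = μ_j(k)), and let β < −μ_i(k). Then for every pair of real numbers (a, b) satisfying (i²π²·a² + j²π²·b²)/2 = −(β + μ_i(k)), the function u(x) = a·sin(iπx) + b·sin(jπx) is a stationary beam solution with parameters β, k. Consequently, the set of stationary beam solutions with parameters β, k is infinite. -/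
open Real

/-!
For `c = iπ` and `d = jπ` both modes `sin (c x)`, `sin (d x)` satisfy the hinged boundary
conditions, and on them `∂⁴ = c⁴`, `∂² = -c²` (resp. `d⁴`, `-d²`). So
`u = a sin (c x) + b sin (d x)` solves the beam equation as soon as `c²` and `d²` are both roots
of `t² + λ t + k`, where `λ = β + ∫₀¹ u'²`; by Vieta this means `k = c²d²`, the resonance, and
`λ = -(c² + d²) = -μ_i(k)`. Orthogonality of the cosines gives `∫₀¹ u'² = (c²a² + d²b²)/2`, so
the second condition is the ellipse equation. At `x = 1/j` the second mode vanishes and the first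
does not, so points of the ellipse with different `a` give different solutions on `[0,1]`.
-/

namespace Real

theorem integral_cos_int_mul_pi_mul {p : ℤ} (hp : p ≠ 0) :
    ∫ x in (0 : ℝ)..1, cos (p * π * x) = 0 := by
  have hpπ : (p : ℝ) * π ≠ 0 := mul_ne_zero (Int.cast_ne_zero.mpr hp) pi_ne_zero
  rw [intervalIntegral.integral_comp_mul_left cos hpπ, integral_cos, mul_one, mul_zero,
    sin_int_mul_pi, sin_zero, sub_zero, smul_zero]

theorem integral_cos_nat_mul_pi_mul_cos {m n : ℕ} (hmn : m ≠ n) :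
    ∫ x in (0 : ℝ)..1, cos (m * π * x) * cos (n * π * x) = 0 := by
  have hprod : ∀ x : ℝ, cos (m * π * x) * cos (n * π * x) =
      cos (((m + n : ℕ) : ℤ) * π * x) / 2 + cos (((m : ℤ) - n : ℤ) * π * x) / 2 := by
    intro x
    push_cast
    rw [show (m + n : ℝ) * π * x = m * π * x + n * π * x by ring,
      show ((m : ℝ) - n) * π * x = m * π * x - n * π * x by ring, cos_add, cos_sub]
    ring
  have hsum : ((m + n : ℕ) : ℤ) ≠ 0 := by omega
  have hdiff : (m : ℤ) - n ≠ 0 := by omega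
  simp_rw [hprod]
  rw [intervalIntegral.integral_add ((by fun_prop : Continuous _).intervalIntegrable _ _)
      ((by fun_prop : Continuous _).intervalIntegrable _ _), intervalIntegral.integral_div,
    intervalIntegral.integral_div, integral_cos_int_mul_pi_mul hsum,
    integral_cos_int_mul_pi_mul hdiff]
  norm_num

theorem integral_cos_nat_mul_pi_mul_sq {m : ℕ} (hm : m ≠ 0) :
    ∫ x in (0 : ℝ)..1, cos (m * π * x) ^ 2 = 1 / 2 := by
  have hsq : ∀ x : ℝ, cos (m * π * x) ^ 2 = 1 / 2 + cos (((2 * m : ℕ) : ℤ) * π * x) / 2 := by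
    intro x
    rw [cos_sq]
    push_cast
    ring_nf
  have h2m : ((2 * m : ℕ) : ℤ) ≠ 0 := by omega
  simp_rw [hsq]
  rw [intervalIntegral.integral_add intervalIntegrable_const
      ((by fun_prop : Continuous _).intervalIntegrable _ _), intervalIntegral.integral_div,
    intervalIntegral.integral_div, integral_cos_int_mul_pi_mul h2m]
  norm_num

end Real

section SineModes

variable (a b c d : ℝ)

theorem iteratedDeriv_sin_mul_add_sin_mul (n : ℕ) :
    iteratedDeriv n (fun x => a * sin (c * x) + b * sin (d * x)) =
      fun x => a * (c ^ n * iteratedDeriv n sin (c * x)) +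
        b * (d ^ n * iteratedDeriv n sin (d * x)) := by
  funext x
  rw [iteratedDeriv_fun_add (by fun_prop) (by fun_prop), iteratedDeriv_const_mul_field,
    iteratedDeriv_const_mul_field, iteratedDeriv_comp_const_mul contDiff_sin,
    iteratedDeriv_comp_const_mul contDiff_sin]

theorem deriv_sin_mul_add_sin_mul :
    deriv (fun x => a * sin (c * x) + b * sin (d * x)) =
      fun x => a * c * cos (c * x) + b * d * cos (d * x) := by
  rw [← iteratedDeriv_one, iteratedDeriv_sin_mul_add_sin_mul]
  simp only [pow_one, iteratedDeriv_one, Real.deriv_sin, mul_assoc]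

theorem iteratedDeriv_two_sin_mul_add_sin_mul :
    iteratedDeriv 2 (fun x => a * sin (c * x) + b * sin (d * x)) =
      fun x => -(a * c ^ 2 * sin (c * x) + b * d ^ 2 * sin (d * x)) := by
  have h : iteratedDeriv 2 sin = -sin := by simpa using iteratedDeriv_even_sin 1
  rw [iteratedDeriv_sin_mul_add_sin_mul, h]
  funext x
  simp only [Pi.neg_apply]
  ring

theorem iteratedDeriv_four_sin_mul_add_sin_mul :
    iteratedDeriv 4 (fun x => a * sin (c * x) + b * sin (d * x)) =
      fun x => a * c ^ 4 * sin (c * x) + b * d ^ 4 * sin (d * x) := by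
  have h : iteratedDeriv 4 sin = sin := by simpa using iteratedDeriv_even_sin 2
  rw [iteratedDeriv_sin_mul_add_sin_mul, h]
  simp only [mul_assoc]

theorem isStationarySolution_sin_mul_add_sin_mul {β k : ℝ} (hc : sin c = 0) (hd : sin d = 0)
    (hβ : β + ∫ y in (0 : ℝ)..1, deriv (fun x => a * sin (c * x) + b * sin (d * x)) y ^ 2 =
      -(c ^ 2 + d ^ 2))
    (hk : k = c ^ 2 * d ^ 2) :
    IsStationarySolution β k (fun x => a * sin (c * x) + b * sin (d * x)) := by
  refine ⟨by fun_prop, fun x _ => ?_, by simp, by simp [hc, hd],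
    by simp [iteratedDeriv_two_sin_mul_add_sin_mul],
    by simp [iteratedDeriv_two_sin_mul_add_sin_mul, hc, hd]⟩
  rw [hβ, hk, iteratedDeriv_two_sin_mul_add_sin_mul, iteratedDeriv_four_sin_mul_add_sin_mul]
  ring

end SineModes

theorem integral_deriv_sin_mul_add_sin_mul_sq (a b : ℝ) {i j : ℕ} (hi : i ≠ 0) (hj : j ≠ 0)
    (hij : i ≠ j) :
    ∫ y in (0 : ℝ)..1, deriv (fun x => a * sin (i * π * x) + b * sin (j * π * x)) y ^ 2 =
      ((i : ℝ) ^ 2 * π ^ 2 * a ^ 2 + (j : ℝ) ^ 2 * π ^ 2 * b ^ 2) / 2 := by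
  have hexpand : ∀ y : ℝ, (a * (i * π) * cos (i * π * y) + b * (j * π) * cos (j * π * y)) ^ 2 =
      (a * i * π) ^ 2 * cos (i * π * y) ^ 2 + (b * j * π) ^ 2 * cos (j * π * y) ^ 2 +
        2 * a * b * i * j * π ^ 2 * (cos (i * π * y) * cos (j * π * y)) := fun y => by ring
  rw [deriv_sin_mul_add_sin_mul]
  simp_rw [hexpand]
  rw [intervalIntegral.integral_add, intervalIntegral.integral_add,
    intervalIntegral.integral_const_mul, intervalIntegral.integral_const_mul,
    intervalIntegral.integral_const_mul, integral_cos_nat_mul_pi_mul_sq hi,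
    integral_cos_nat_mul_pi_mul_sq hj, integral_cos_nat_mul_pi_mul_cos hij]
  · ring
  all_goals exact (by fun_prop : Continuous _).intervalIntegrable _ _

theorem mu_resonant {i : ℕ} (hi : i ≠ 0) (j : ℕ) :
    mu i ((i : ℝ) ^ 2 * (j : ℝ) ^ 2 * π ^ 4) = (i : ℝ) ^ 2 * π ^ 2 + (j : ℝ) ^ 2 * π ^ 2 := by
  have : (i : ℝ) ≠ 0 := Nat.cast_ne_zero.mpr hi
  unfold mu
  field_simp
  ring

theorem infinite_restrictions_of_forall_ellipse {P : (ℝ → ℝ) → Prop} {i j : ℕ} (hi : 0 < i)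
    (hij : i < j) {r : ℝ} (hr : 0 < r)
    (hP : ∀ a b : ℝ, (i : ℝ) ^ 2 * π ^ 2 * a ^ 2 + (j : ℝ) ^ 2 * π ^ 2 * b ^ 2 = r →
      P (fun x => a * sin (i * π * x) + b * sin (j * π * x))) :
    {f : Set.Icc (0 : ℝ) 1 → ℝ | ∃ u, P u ∧ ∀ x : Set.Icc (0 : ℝ) 1, f x = u x}.Infinite := by
  have hi' : (0 : ℝ) < i := Nat.cast_pos.mpr hi
  have hj' : (0 : ℝ) < j := Nat.cast_pos.mpr (hi.trans hij)
  set A := √r / (i * π)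
  set B := √r / (j * π)
  have hA : A ≠ 0 := by positivity
  have hellipse : ∀ t,
      (i : ℝ) ^ 2 * π ^ 2 * (A * cos t) ^ 2 + (j : ℝ) ^ 2 * π ^ 2 * (B * sin t) ^ 2 = r := by
    intro t
    simp only [A, B, div_pow, mul_pow, sq_sqrt hr.le]
    field_simp
    exact cos_sq_add_sin_sq t
  let x₀ : Set.Icc (0 : ℝ) 1 :=
    ⟨(j : ℝ)⁻¹, by positivity, inv_le_one_of_one_le₀ (by exact_mod_cast hi.trans hij)⟩
  have hsin_i : sin (i * π * x₀) ≠ 0 := by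
    refine (sin_pos_of_pos_of_lt_pi (by positivity) ?_).ne'
    have : (i : ℝ) < j := by exact_mod_cast hij
    calc (i : ℝ) * π * (j : ℝ)⁻¹ = i / j * π := by ring
      _ < 1 * π := by gcongr; rwa [div_lt_one hj']
      _ = π := one_mul π
  have hsin_j : sin (j * π * x₀) = 0 := by
    show sin (j * π * (j : ℝ)⁻¹) = 0
    rw [mul_right_comm, mul_inv_cancel₀ hj'.ne', one_mul, sin_pi]
  refine Set.infinite_of_injOn_mapsTo (s := Set.Icc 0 π)
    (f := fun t (x : Set.Icc (0 : ℝ) 1) =>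
      A * cos t * sin (i * π * x) + B * sin t * sin (j * π * x))
    ?_ (fun t _ => ⟨_, hP _ _ (hellipse t), fun _ => rfl⟩) (Set.Icc_infinite pi_pos)
  intro t₁ ht₁ t₂ ht₂ h
  have hcos := congrFun h x₀
  simp only [hsin_j, mul_zero, add_zero, mul_left_inj' hsin_i, mul_right_inj' hA] at hcos
  exact injOn_cos ht₁ ht₂ hcos

/-- For the resonant value `k = i²j²π⁴` (`i < j`) and `β < −μ_i(k)`, every pair `(a, b)` on the
ellipse `(i²π²a² + j²π²b²)/2 = −(β + μ_i(k))` yields a stationary beam solution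
`u(x) = a·sin(iπx) + b·sin(jπx)`; consequently, there are infinitely many stationary beam
solutions with parameters `β`, `k`. -/
theorem resonant_infinitely_many_solutions (i j : ℕ) (hi : 1 ≤ i) (hij : i < j)
    (k β : ℝ) (hk : k = (i : ℝ)^2 * (j : ℝ)^2 * π^4) (hβ : β < -mu i k) :
    (∀ a b : ℝ,
        ((i : ℝ)^2 * π^2 * a^2 + (j : ℝ)^2 * π^2 * b^2) / 2 = -(β + mu i k) →
        IsStationarySolution β k
          (fun x => a * Real.sin ((i : ℝ) * π * x) + b * Real.sin ((j : ℝ) * π * x))) ∧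
    {f : Set.Icc (0 : ℝ) 1 → ℝ |
        ∃ u : ℝ → ℝ, IsStationarySolution β k u ∧
          ∀ x : Set.Icc (0 : ℝ) 1, f x = u x}.Infinite := by
  have hmu : mu i k = (i : ℝ) ^ 2 * π ^ 2 + (j : ℝ) ^ 2 * π ^ 2 := hk ▸ mu_resonant (by omega) j
  have hsolution : ∀ a b : ℝ,
      ((i : ℝ)^2 * π^2 * a^2 + (j : ℝ)^2 * π^2 * b^2) / 2 = -(β + mu i k) →
      IsStationarySolution β k
        (fun x => a * Real.sin ((i : ℝ) * π * x) + b * Real.sin ((j : ℝ) * π * x)) := by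
    intro a b hab
    refine isStationarySolution_sin_mul_add_sin_mul a b _ _ (sin_nat_mul_pi i) (sin_nat_mul_pi j)
      ?_ (by rw [hk]; ring)
    rw [integral_deriv_sin_mul_add_sin_mul_sq a b (by omega) (by omega) hij.ne]
    linear_combination hab - hmu
  exact ⟨hsolution, infinite_restrictions_of_forall_ellipse hi hij (r := -2 * (β + mu i k))
    (by linarith) fun a b hab => hsolution a b (by linarith)⟩
end

section
/- Let 0 < k ≤ π⁴ and β ∈ ℝ. Then there exists ν > 0 such that x² + βx + k ≥ ν·x² for all real x ≥ π², if and only if β > −(π² + k/π²). -/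
open Real

/-!
Write `m = a² + βa + k` for the value of the quadratic at the left end `a` of the range.
Coercivity forces `m > 0` (evaluate at `x = a`). Conversely, for `k ≤ a²` and `x ≥ a`,
`a (x² + βx + k) = a (x - a)² + m x + (a² - k)(x - a) ≥ a (x - a)² + m x`,
and the right-hand side dominates `a m x² / (a² + m)`, so `ν = m / (a² + m)` works.
-/

section QuadraticCoercivity

variable {a k β x : ℝ}

lemma mul_sub_sq_add_le_mul_quadratic (hk : k ≤ a ^ 2) (hx : a ≤ x) :
    a * (x - a) ^ 2 + (a ^ 2 + β * a + k) * x ≤ a * (x ^ 2 + β * x + k) := by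
  nlinarith [mul_nonneg (sub_nonneg.2 hk) (sub_nonneg.2 hx)]

lemma mul_sq_le_of_le {m : ℝ} (ha : 0 ≤ a) (hm : 0 ≤ m) (hx : a ≤ x) :
    a * m * x ^ 2 ≤ (a ^ 2 + m) * (a * (x - a) ^ 2 + m * x) := by
  -- the difference is `a (a (x - a) - m)² + m (a² + m) (x - a)`
  nlinarith [mul_nonneg ha (sq_nonneg (a * (x - a) - m)),
    mul_nonneg (mul_nonneg hm (by positivity : 0 ≤ a ^ 2 + m)) (sub_nonneg.2 hx)]

theorem exists_coercive_on_Ici_iff (ha : 0 < a) (hk : k ≤ a ^ 2) :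
    (∃ ν > 0, ∀ x : ℝ, a ≤ x → ν * x ^ 2 ≤ x ^ 2 + β * x + k) ↔ 0 < a ^ 2 + β * a + k := by
  constructor
  · rintro ⟨ν, hν, h⟩
    exact (mul_pos hν (pow_pos ha 2)).trans_le (h a le_rfl)
  · intro hm
    set m := a ^ 2 + β * a + k
    have hden : 0 < a ^ 2 + m := by positivity
    refine ⟨m / (a ^ 2 + m), div_pos hm hden, fun x hx => ?_⟩
    rw [div_mul_eq_mul_div, div_le_iff₀ hden, ← mul_le_mul_iff_of_pos_left ha]
    calc a * (m * x ^ 2) = a * m * x ^ 2 := by ring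
      _ ≤ (a ^ 2 + m) * (a * (x - a) ^ 2 + m * x) := mul_sq_le_of_le ha.le hm.le hx
      _ ≤ (a ^ 2 + m) * (a * (x ^ 2 + β * x + k)) :=
        mul_le_mul_of_nonneg_left (mul_sub_sq_add_le_mul_quadratic hk hx) hden.le
      _ = a * ((x ^ 2 + β * x + k) * (a ^ 2 + m)) := by ring

lemma quadratic_pos_iff_neg_lt (ha : 0 < a) :
    0 < a ^ 2 + β * a + k ↔ -(a + k / a) < β := by
  have : a ^ 2 + β * a + k = (a + k / a + β) * a := by field_simp; ring
  rw [this, mul_pos_iff_of_pos_right ha, neg_lt_iff_pos_add']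

end QuadraticCoercivity

theorem quadratic_coercive_iff_small_k_general (k β : ℝ) (hk : k ≤ π^4) :
    (∃ ν > 0, ∀ x : ℝ, π^2 ≤ x → ν * x^2 ≤ x^2 + β * x + k) ↔
      -(π^2 + k / π^2) < β := by
  have hπ2 : (0 : ℝ) < π ^ 2 := by positivity
  rw [exists_coercive_on_Ici_iff hπ2 (by rwa [← pow_mul]), quadratic_pos_iff_neg_lt hπ2]

/-- For `0 < k ≤ π⁴`: there is `ν > 0` with `x² + βx + k ≥ ν·x²` for all `x ≥ π²`
iff `β > −(π² + k/π²)`. -/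
theorem quadratic_coercive_iff_small_k (k β : ℝ) (hk0 : 0 < k) (hk : k ≤ π^4) :
    (∃ ν > 0, ∀ x : ℝ, π^2 ≤ x → ν * x^2 ≤ x^2 + β * x + k) ↔
      -(π^2 + k / π^2) < β :=
  quadratic_coercive_iff_small_k_general k β hk
end
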